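/- arXiv:1404.5094 — 3 statements merged into one kernel-verified Lean document; each statement's English description precedes it below -/
import Mathlib

section
/- Let L ⊆ ℝ be a Lebesgue measurable set with the property that for every real number α ≥ 0 there exists j ∈ {1,…,8} with jα ∈ L. Then for every T ≥ 0, λ([0,T] ∩ L) ≥ (35/761)·T, where λ denotes Lebesgue measure on ℝ. (Note 761/35 = 8·(1 + 1/2 + ⋯ + 1/8) < 22.) -/
/-!
Put `A = [0,T] ∩ L`. Every `α ∈ [0, T/8]` has some `jα ∈ A` with `1 ≤ j ≤ 8`, so `[0, T/8]` is
covered by the dilates `j⁻¹A`. Since `λ(j⁻¹A) = λ(A)/j`, this gives `T/8 ≤ H₈ · λ(A)` with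
`H₈ = 761/280` the eighth harmonic number.
-/

open MeasureTheory

theorem Real.volume_biUnion_preimage_mul_le {ι : Type*} (s : Finset ι) (a : ι → ℝ)
    (ha : ∀ i ∈ s, a i ≠ 0) (A : Set ℝ) :
    volume (⋃ i ∈ s, (a i * ·) ⁻¹' A) ≤ (∑ i ∈ s, ENNReal.ofReal |(a i)⁻¹|) * volume A :=
  calc volume (⋃ i ∈ s, (a i * ·) ⁻¹' A)
      ≤ ∑ i ∈ s, volume ((a i * ·) ⁻¹' A) := measure_biUnion_finset_le _ _
    _ = ∑ i ∈ s, ENNReal.ofReal |(a i)⁻¹| * volume A :=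
        Finset.sum_congr rfl fun i hi => Real.volume_preimage_mul_left (ha i hi) A
    _ = (∑ i ∈ s, ENNReal.ofReal |(a i)⁻¹|) * volume A := (Finset.sum_mul _ _ _).symm

theorem Icc_subset_biUnion_preimage_mul {L : Set ℝ} {n : ℕ}
    (h : ∀ α : ℝ, 0 ≤ α → ∃ j : ℕ, 1 ≤ j ∧ j ≤ n ∧ (j : ℝ) * α ∈ L) (T : ℝ) :
    Set.Icc 0 T ⊆ ⋃ j ∈ Finset.Icc 1 n, ((j : ℝ) * ·) ⁻¹' (Set.Icc 0 (n * T) ∩ L) := by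
  intro α hα
  obtain ⟨j, hj1, hjn, hjL⟩ := h α hα.1
  have hjα : (j : ℝ) * α ≤ n * T := mul_le_mul (by exact_mod_cast hjn) hα.2 hα.1 (Nat.cast_nonneg n)
  exact Set.mem_biUnion (Finset.mem_Icc.mpr ⟨hj1, hjn⟩)
    ⟨⟨mul_nonneg (Nat.cast_nonneg j) hα.1, hjα⟩, hjL⟩

theorem ofReal_le_harmonic_mul_volume_Icc_inter {L : Set ℝ} {n : ℕ}
    (h : ∀ α : ℝ, 0 ≤ α → ∃ j : ℕ, 1 ≤ j ∧ j ≤ n ∧ (j : ℝ) * α ∈ L) (T : ℝ) :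
    ENNReal.ofReal T ≤ ENNReal.ofReal (harmonic n) * volume (Set.Icc 0 (n * T) ∩ L) := by
  have hsum :
      ∑ j ∈ Finset.Icc 1 n, ENNReal.ofReal |(j : ℝ)⁻¹| = ENNReal.ofReal (harmonic n) := by
    rw [← ENNReal.ofReal_sum_of_nonneg fun _ _ => abs_nonneg _, harmonic_eq_sum_Icc]
    push_cast
    simp only [abs_inv, Nat.abs_cast]
  calc ENNReal.ofReal T = volume (Set.Icc 0 T) := by rw [Real.volume_Icc, sub_zero]
    _ ≤ _ := measure_mono (Icc_subset_biUnion_preimage_mul h T)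
    _ ≤ _ := Real.volume_biUnion_preimage_mul_le _ _
        (fun j hj => Nat.cast_ne_zero.mpr (Nat.one_le_iff_ne_zero.mp (Finset.mem_Icc.mp hj).1)) _
    _ = _ := by rw [hsum]

theorem stmt_4_general (L : Set ℝ)
    (h : ∀ α : ℝ, 0 ≤ α → ∃ j : ℕ, 1 ≤ j ∧ j ≤ 8 ∧ (j : ℝ) * α ∈ L) :
    ∀ T : ℝ, 0 ≤ T →
      ENNReal.ofReal (35 / 761 * T) ≤ volume (Set.Icc (0:ℝ) T ∩ L) := by
  intro T _
  have hH : (harmonic 8 : ℝ) = 761 / 280 := by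
    norm_num [harmonic_succ]
  have key := ofReal_le_harmonic_mul_volume_Icc_inter h (T / 8)
  rw [hH, Nat.cast_ofNat, mul_div_cancel₀ T (by norm_num)] at key
  calc ENNReal.ofReal (35 / 761 * T) = ENNReal.ofReal (280 / 761) * ENNReal.ofReal (T / 8) := by
        rw [← ENNReal.ofReal_mul (by norm_num)]; ring_nf
    _ ≤ ENNReal.ofReal (280 / 761) * (ENNReal.ofReal (761 / 280) * volume (Set.Icc 0 T ∩ L)) :=
        mul_le_mul_right key _
    _ = volume (Set.Icc 0 T ∩ L) := by
        rw [← mul_assoc, ← ENNReal.ofReal_mul (by norm_num)]; norm_num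

/-- If `L ⊆ ℝ` is Lebesgue measurable and for every `α ≥ 0` some multiple
`jα` with `1 ≤ j ≤ 8` lies in `L`, then `λ([0,T] ∩ L) ≥ (35/761)·T` for all `T ≥ 0`. -/
theorem stmt_4 (L : Set ℝ) (hL : MeasurableSet L)
    (h : ∀ α : ℝ, 0 ≤ α → ∃ j : ℕ, 1 ≤ j ∧ j ≤ 8 ∧ (j : ℝ) * α ∈ L) :
    ∀ T : ℝ, 0 ≤ T →
      ENNReal.ofReal (35 / 761 * T) ≤ volume (Set.Icc (0:ℝ) T ∩ L) :=
  stmt_4_general L h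
end

section
/- There exists an integer k_0 such that for all integers k ≥ k_0 the following holds. Set A = log k - 2 log log k and T = (e^A - 1)/A, and define g : [0,∞) → ℝ by g(t) = 1/(1+At) for t ∈ [0,T] and g(t) = 0 for t > T. Then for every real x ≥ 0, ( ∫_0^x g(t) dt )² ≤ (log k) · ∫_0^x g(t)² dt. -/
open MeasureTheory intervalIntegral

/-- With `A = log k - 2 log log k` and `T = (e^A - 1)/A`, this is the function
`g(t) = 1/(1 + At)` for `t ∈ [0, T]` and `g(t) = 0` otherwise. -/
noncomputable def gfun (k : ℕ) (t : ℝ) : ℝ :=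
  if 0 ≤ t ∧ t ≤ (Real.exp (Real.log k - 2 * Real.log (Real.log k)) - 1) /
      (Real.log k - 2 * Real.log (Real.log k)) then
    1 / (1 + (Real.log k - 2 * Real.log (Real.log k)) * t)
  else 0

/-!
Put `L = log k` and `u = 1 + A min(x, T)`. Since `g` vanishes beyond `T`, the two integrals are
`log u / A` and `(1 - u⁻¹) / A`, and the claim becomes `(log u)² ≤ A L (1 - u⁻¹)`. The choice of `T`
gives `log u ≤ A`, and `log u ≤ u - 1` rearranges to `log u ≤ (1 - u⁻¹)(1 + log u)`; together
`(log u)² ≤ A (A + 1)(1 - u⁻¹)`. It remains that `0 < A` and `A + 1 ≤ L`, i.e. `2 log L ≥ 1`, both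
true for large `k` since `log L = o(L)` and `log L → ∞`.
-/

open Real Set Filter
open scoped Interval

theorem integral_indicator_Icc_eq_integral_min (f : ℝ → ℝ) {x T : ℝ} (hx : 0 ≤ x) (hT : 0 ≤ T) :
    ∫ t in (0:ℝ)..x, (Icc 0 T).indicator f t = ∫ t in (0:ℝ)..min x T, f t := by
  have hset : Ioc 0 x ∩ Icc 0 T = Ioc 0 x ∩ Iic T := by
    ext t
    simp only [mem_inter_iff, mem_Ioc, mem_Icc, mem_Iic]
    constructor
    · rintro ⟨htx, -, htT⟩; exact ⟨htx, htT⟩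
    · rintro ⟨htx, htT⟩; exact ⟨htx, htx.1.le, htT⟩
  rw [integral_of_le hx, integral_of_le (le_min hx hT), setIntegral_indicator measurableSet_Icc,
    hset, Ioc_inter_Iic]

theorem zero_notMem_uIcc_one_add_mul {A y : ℝ} (hA : 0 ≤ A) (hy : 0 ≤ y) :
    (0:ℝ) ∉ [[1 + A * 0, 1 + A * y]] := by
  rw [uIcc_of_le (by nlinarith)]
  exact fun h => by linarith [h.1]

theorem integral_one_div_one_add_mul {A y : ℝ} (hA : 0 < A) (hy : 0 ≤ y) :
    ∫ t in (0:ℝ)..y, 1 / (1 + A * t) = log (1 + A * y) / A := by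
  have h0 := zero_notMem_uIcc_one_add_mul hA.le hy
  rw [integral_comp_add_mul (fun u => 1 / u) hA.ne', integral_one_div h0]
  simp [div_eq_inv_mul]

theorem integral_one_div_one_add_mul_sq {A y : ℝ} (hA : 0 < A) (hy : 0 ≤ y) :
    ∫ t in (0:ℝ)..y, (1 / (1 + A * t)) ^ 2 = (1 - (1 + A * y)⁻¹) / A := by
  have h0 := zero_notMem_uIcc_one_add_mul hA.le hy
  have hpow : ∀ u : ℝ, (1 / u) ^ 2 = u ^ (-2 : ℤ) := fun u => by
    rw [zpow_neg, one_div, inv_pow]; norm_cast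
  simp_rw [hpow]
  rw [integral_comp_add_mul (fun u : ℝ => u ^ (-2 : ℤ)) hA.ne',
    integral_zpow (Or.inr ⟨by norm_num, h0⟩)]
  norm_num
  ring

theorem log_le_one_sub_inv_mul_one_add_log {u : ℝ} (hu : 0 < u) :
    log u ≤ (1 - u⁻¹) * (1 + log u) := by
  have hlog := log_le_sub_one_of_pos hu
  have hdiff : (1 - u⁻¹) * (1 + log u) - log u = (u - 1 - log u) / u := by field_simp; ring
  rw [← sub_nonneg, hdiff]
  exact div_nonneg (by linarith) hu.le

theorem sq_log_le {u A : ℝ} (hu : 1 ≤ u) (hA : log u ≤ A) :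
    log u ^ 2 ≤ A * (A + 1) * (1 - u⁻¹) := by
  have hlog := log_nonneg hu
  have hinv : 0 ≤ 1 - u⁻¹ := sub_nonneg.2 (inv_le_one_of_one_le₀ hu)
  calc log u ^ 2 = log u * log u := sq _
    _ ≤ A * ((1 - u⁻¹) * (1 + log u)) :=
      mul_le_mul hA (log_le_one_sub_inv_mul_one_add_log (by linarith)) hlog (by linarith)
    _ ≤ A * ((1 - u⁻¹) * (1 + A)) := by gcongr; linarith
    _ = A * (A + 1) * (1 - u⁻¹) := by ring

theorem sq_integral_one_div_one_add_mul_le {A L y : ℝ} (hA : 0 < A) (hL : A + 1 ≤ L)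
    (hy : 0 ≤ y) (hyA : 1 + A * y ≤ exp A) :
    (∫ t in (0:ℝ)..y, 1 / (1 + A * t)) ^ 2 ≤ L * ∫ t in (0:ℝ)..y, (1 / (1 + A * t)) ^ 2 := by
  rw [integral_one_div_one_add_mul hA hy, integral_one_div_one_add_mul_sq hA hy]
  set u := 1 + A * y
  have hu : 1 ≤ u := le_add_of_nonneg_right (mul_nonneg hA.le hy)
  have hlog : log u ≤ A := (log_le_iff_le_exp (by linarith)).2 hyA
  have hinv : 0 ≤ (1 - u⁻¹) / A := div_nonneg (sub_nonneg.2 (inv_le_one_of_one_le₀ hu)) hA.le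
  calc (log u / A) ^ 2 = log u ^ 2 / A ^ 2 := div_pow _ _ _
    _ ≤ A * (A + 1) * (1 - u⁻¹) / A ^ 2 := by gcongr; exact sq_log_le hu hlog
    _ = (A + 1) * ((1 - u⁻¹) / A) := by field_simp
    _ ≤ L * ((1 - u⁻¹) / A) := by gcongr

theorem sq_integral_indicator_le {A L T x : ℝ} (hA : 0 < A) (hL : A + 1 ≤ L) (hT : 0 ≤ T)
    (hTA : 1 + A * T ≤ exp A) (hx : 0 ≤ x) :
    (∫ t in (0:ℝ)..x, (Icc 0 T).indicator (fun t => 1 / (1 + A * t)) t) ^ 2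
      ≤ L * ∫ t in (0:ℝ)..x, ((Icc 0 T).indicator (fun t => 1 / (1 + A * t)) t) ^ 2 := by
  have hsq : (fun t => ((Icc 0 T).indicator (fun t => 1 / (1 + A * t)) t) ^ 2)
      = (Icc 0 T).indicator (fun t => (1 / (1 + A * t)) ^ 2) :=
    (indicator_comp_of_zero (g := fun y : ℝ => y ^ 2) (by norm_num)).symm
  rw [hsq, integral_indicator_Icc_eq_integral_min _ hx hT,
    integral_indicator_Icc_eq_integral_min _ hx hT]
  refine sq_integral_one_div_one_add_mul_le hA hL (le_min hx hT) (le_trans ?_ hTA)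
  gcongr
  exact min_le_right x T

theorem eventually_sub_two_mul_log_pos_and_add_one_le :
    ∀ᶠ L in atTop, 0 < L - 2 * log L ∧ L - 2 * log L + 1 ≤ L := by
  filter_upwards [isLittleO_log_id_atTop.bound (by norm_num : (0:ℝ) < 1 / 3),
    tendsto_log_atTop.eventually_ge_atTop 1, eventually_gt_atTop 0] with L hlog h1 hL
  rw [norm_of_nonneg (by linarith), id, norm_of_nonneg hL.le] at hlog
  constructor <;> linarith

theorem stmt_17 :
    ∃ k₀ : ℕ, ∀ k : ℕ, k₀ ≤ k → ∀ x : ℝ, 0 ≤ x →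
      (∫ t in (0:ℝ)..x, gfun k t) ^ 2
        ≤ Real.log k * ∫ t in (0:ℝ)..x, (gfun k t) ^ 2 := by
  obtain ⟨k₀, hk₀⟩ := eventually_atTop.1 <|
    (tendsto_log_atTop.comp tendsto_natCast_atTop_atTop).eventually
      eventually_sub_two_mul_log_pos_and_add_one_le
  refine ⟨k₀, fun k hk x hx => ?_⟩
  set A := log k - 2 * log (log k)
  obtain ⟨hA, hL⟩ : 0 < A ∧ A + 1 ≤ log k := hk₀ k hk
  have hT : 0 ≤ (exp A - 1) / A := div_nonneg (by linarith [add_one_le_exp A]) hA.le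
  have hTA : 1 + A * ((exp A - 1) / A) = exp A := by field_simp; ring
  have hg : gfun k = (Icc 0 ((exp A - 1) / A)).indicator (fun t => 1 / (1 + A * t)) := by
    ext t; simp only [gfun, indicator_apply, mem_Icc]; rfl
  rw [hg]
  exact sq_integral_indicator_le hA hL hT hTA.le hx
end

section
/- Let {h_1, …, h_k} be an admissible k-tuple of integers, let S be a finite set of integers, and let 𝒫 be a set of prime numbers, such that for some real x ≥ 2: {h_1, …, h_k} ⊆ S ⊆ [0, x²] and the number of primes p ∈ 𝒫 with p > x is greater than |S| + k. Then there exists a family of integers (a_p)_{p ∈ 𝒫} such that {h_1, …, h_k} = S \ ⋃_{p ∈ 𝒫} {g ∈ ℤ : g ≡ a_p (mod p)}. -/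
/-- A `k`-tuple `h` of integers is admissible if for every prime `p` there is
an integer `n` with `∏ i (n + h i) ≢ 0 (mod p)`. -/
def AdmissibleZTuple {k : ℕ} (h : Fin k → ℤ) : Prop :=
  ∀ p : ℕ, p.Prime → ∃ n : ℤ, ∀ i, ¬ ((p : ℤ) ∣ n + h i)

/-!
Every `t ∈ S` outside the tuple is sieved out by its own prime `p_t ∈ F`, via `a_{p_t} = t`.
A prime `p > x` can divide a nonzero difference `h i - t` with `|h i - t| ≤ x²` only if no
other prime of `F` does, so at most `k` primes of `F` are unusable for `t`; more than `|S|`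
remain, and Hall's theorem makes the choice `t ↦ p_t` injective. Every remaining prime `p`
gets the residue `-n_p`, where `n_p` is the admissibility witness at `p`, and so removes no
element of the tuple.
-/

open Finset Function Set

theorem AdmissibleZTuple.exists_residues {k : ℕ} {h : Fin k → ℤ} (hadm : AdmissibleZTuple h) :
    ∃ n : ℕ → ℤ, ∀ p : ℕ, p.Prime → ∀ i, ¬ (p : ℤ) ∣ n p + h i := by
  classical
  choose n hn using hadm
  exact ⟨fun p => if hp : p.Prime then n p hp else 0, fun p hp => by simpa [hp] using hn p hp⟩

theorem Nat.Prime.eq_of_dvd_of_natAbs_lt_mul {p q : ℕ} (hp : p.Prime) (hq : q.Prime) {d : ℤ}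
    (hd : d ≠ 0) (hpd : (p : ℤ) ∣ d) (hqd : (q : ℤ) ∣ d) (hlt : d.natAbs < p * q) : p = q := by
  by_contra hpq
  have hcop : Nat.Coprime p q := (Nat.coprime_primes hp hq).2 hpq
  have hpqd : p * q ∣ d.natAbs :=
    hcop.mul_dvd_of_dvd_of_dvd (Int.natCast_dvd.1 hpd) (Int.natCast_dvd.1 hqd)
  exact absurd (Nat.le_of_dvd (Int.natAbs_pos.2 hd) hpqd) (not_le.2 hlt)

/-- Each `d i` has at most one prime divisor in `F`, as two of them would multiply to a divisor
larger than `|d i|`. -/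
theorem card_le_card_filter_forall_not_dvd_add {ι : Type*} [Fintype ι] (F : Finset ℕ)
    (hF : ∀ p ∈ F, p.Prime) (d : ι → ℤ) (hd : ∀ i, d i ≠ 0)
    (hlt : ∀ i, ∀ p ∈ F, ∀ q ∈ F, (d i).natAbs < p * q)
    [DecidablePred fun p : ℕ => ∀ i, ¬ (p : ℤ) ∣ d i] :
    #F ≤ #(F.filter fun p : ℕ => ∀ i, ¬ (p : ℤ) ∣ d i) + Fintype.card ι := by
  classical
  have hone : ∀ i, #(F.filter fun p : ℕ => (p : ℤ) ∣ d i) ≤ 1 := by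
    intro i
    refine Finset.card_le_one.2 fun p hp q hq => ?_
    rw [Finset.mem_filter] at hp hq
    exact (hF p hp.1).eq_of_dvd_of_natAbs_lt_mul (hF q hq.1) (hd i) hp.2 hq.2 (hlt i p hp.1 q hq.1)
  have hbad : #(F.filter fun p : ℕ => ¬ ∀ i, ¬ (p : ℤ) ∣ d i) ≤ Fintype.card ι :=
    calc #(F.filter fun p : ℕ => ¬ ∀ i, ¬ (p : ℤ) ∣ d i)
        ≤ #(Finset.univ.biUnion fun i => F.filter fun p : ℕ => (p : ℤ) ∣ d i) := by
          refine Finset.card_le_card fun p hp => ?_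
          simp only [Finset.mem_filter, not_forall, not_not] at hp
          obtain ⟨hpF, i, hi⟩ := hp
          exact Finset.mem_biUnion.2 ⟨i, Finset.mem_univ _, Finset.mem_filter.2 ⟨hpF, hi⟩⟩
      _ ≤ ∑ i, #(F.filter fun p : ℕ => (p : ℤ) ∣ d i) := Finset.card_biUnion_le
      _ ≤ ∑ _i : ι, 1 := Finset.sum_le_sum fun i _ => hone i
      _ = Fintype.card ι := by simp
  have hsplit := Finset.card_filter_add_card_filter_not (s := F) (fun p => ∀ i, ¬ (p : ℤ) ∣ d i)
  omega

theorem natAbs_sub_lt_mul {a b : ℤ} {x : ℝ} {p q : ℕ} (hx : 0 ≤ x) (ha : 0 ≤ a)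
    (hax : (a : ℝ) ≤ x ^ 2) (hb : 0 ≤ b) (hbx : (b : ℝ) ≤ x ^ 2) (hp : x < p) (hq : x < q) :
    (a - b).natAbs < p * q := by
  have hab : |((a - b : ℤ) : ℝ)| < (p : ℝ) * q := by
    have hxpq : x ^ 2 < (p : ℝ) * q := by
      rw [sq]
      exact mul_lt_mul'' hp hq hx hx
    have ha' : (0 : ℝ) ≤ a := by exact_mod_cast ha
    have hb' : (0 : ℝ) ≤ b := by exact_mod_cast hb
    rw [Int.cast_sub, abs_sub_lt_iff]
    constructor <;> linarith
  rw [← Int.cast_abs, Int.abs_eq_natAbs] at hab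
  exact_mod_cast hab

theorem exists_injective_forall_mem_of_card_le {ι α : Type*} [Finite ι] [DecidableEq α]
    (A : ι → Finset α) (hA : ∀ i, Nat.card ι ≤ #(A i)) :
    ∃ f : ι → α, Injective f ∧ ∀ i, f i ∈ A i := by
  have := Fintype.ofFinite ι
  refine (Finset.all_card_le_biUnion_card_iff_exists_injective A).1 fun s => ?_
  obtain rfl | ⟨i, hi⟩ := s.eq_empty_or_nonempty
  · simp
  · calc #s ≤ Nat.card ι := by rw [Nat.card_eq_fintype_card]; exact Finset.card_le_univ s
      _ ≤ #(A i) := hA i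
      _ ≤ #(s.biUnion A) := Finset.card_le_card (Finset.subset_biUnion_of_mem A hi)

/-- Sieving by the residues `a p = t` for `p = f t`, and `a p = -n p` for all other `p ∈ P`. -/
theorem diff_iUnion_dvd_sub_extend_eq_range {ι : Type*} (h : ι → ℤ) (S : Set ℤ) (P : Set ℕ)
    (hsub : range h ⊆ S) (f : ↥(S \ range h) → ℕ) (hf : Injective f) (hfP : ∀ t, f t ∈ P)
    (hf_dvd : ∀ t i, ¬ (f t : ℤ) ∣ h i - t) (n : ℕ → ℤ)
    (hn : ∀ p ∈ P, ∀ i, ¬ (p : ℤ) ∣ n p + h i) :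
    S \ ⋃ p ∈ P, {g : ℤ | (p : ℤ) ∣ g - extend f (↑) (fun p => -n p) p} = range h := by
  ext g
  simp only [Set.mem_sdiff, Set.mem_iUnion, Set.mem_ofPred_eq, not_exists]
  constructor
  · rintro ⟨hgS, hgU⟩
    by_contra hg
    let t : ↥(S \ range h) := ⟨g, hgS, hg⟩
    exact hgU (f t) (hfP t) (by rw [hf.extend_apply]; simp [t])
  · rintro ⟨i, rfl⟩
    refine ⟨hsub ⟨i, rfl⟩, fun p hp hdvd => ?_⟩
    by_cases hpf : ∃ t, f t = p
    · obtain ⟨t, rfl⟩ := hpf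
      rw [hf.extend_apply] at hdvd
      exact hf_dvd t i hdvd
    · rw [extend_apply' _ _ _ hpf, sub_neg_eq_add, add_comm] at hdvd
      exact hn p hp i hdvd

theorem stmt_18_general (k : ℕ) (h : Fin k → ℤ)
    (hadm : AdmissibleZTuple h) (S : Finset ℤ) (P : Set ℕ)
    (hP : ∀ p ∈ P, p.Prime) (x : ℝ) (hx : 2 ≤ x)
    (hsub : ∀ i, h i ∈ S) (hS : ∀ s ∈ S, 0 ≤ s ∧ (s : ℝ) ≤ x ^ 2)
    (hcard : ∃ F : Finset ℕ, ↑F ⊆ P ∧ (∀ p ∈ F, x < (p : ℝ)) ∧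
      S.card + k < F.card) :
    ∃ a : ℕ → ℤ,
      (S : Set ℤ) \ (⋃ p ∈ P, {g : ℤ | (p : ℤ) ∣ (g - a p)}) = Set.range h := by
  obtain ⟨F, hFP, hFx, hFcard⟩ := hcard
  obtain ⟨n, hn⟩ := hadm.exists_residues
  let A : ↥((S : Set ℤ) \ range h) → Finset ℕ := fun t => F.filter fun p : ℕ => ∀ i, ¬ (p : ℤ) ∣ h i - t
  have hA : ∀ t, Nat.card ↥((S : Set ℤ) \ range h) ≤ #(A t) := by
    rintro ⟨t, htS, htr⟩
    have hU : Nat.card ↥((S : Set ℤ) \ range h) ≤ #S := by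
      rw [Nat.card_coe_set_eq, ← Set.ncard_coe_finset]
      exact Set.ncard_le_ncard Set.sdiff_subset
    have hF := card_le_card_filter_forall_not_dvd_add F (fun p hp => hP p (hFP hp))
      (fun i => h i - t) (fun i => sub_ne_zero.2 fun he => htr ⟨i, he⟩)
      (fun i p hp q hq => natAbs_sub_lt_mul (by linarith) (hS _ (hsub i)).1 (hS _ (hsub i)).2
        (hS t htS).1 (hS t htS).2 (hFx p hp) (hFx q hq))
    rw [Fintype.card_fin] at hF
    simp only [A]
    omega
  obtain ⟨f, hf, hfA⟩ := exists_injective_forall_mem_of_card_le A hA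
  exact ⟨_, diff_iUnion_dvd_sub_extend_eq_range h S P (Set.range_subset_iff.2 hsub) f hf
    (fun t => hFP (Finset.mem_filter.1 (hfA t)).1) (fun t => (Finset.mem_filter.1 (hfA t)).2)
    n fun p hp => hn p (hP p hp)⟩

theorem stmt_18 (k : ℕ) (h : Fin k → ℤ) (hinj : Function.Injective h)
    (hadm : AdmissibleZTuple h) (S : Finset ℤ) (P : Set ℕ)
    (hP : ∀ p ∈ P, p.Prime) (x : ℝ) (hx : 2 ≤ x)
    (hsub : ∀ i, h i ∈ S) (hS : ∀ s ∈ S, 0 ≤ s ∧ (s : ℝ) ≤ x ^ 2)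
    (hcard : ∃ F : Finset ℕ, ↑F ⊆ P ∧ (∀ p ∈ F, x < (p : ℝ)) ∧
      S.card + k < F.card) :
    ∃ a : ℕ → ℤ,
      (S : Set ℤ) \ (⋃ p ∈ P, {g : ℤ | (p : ℤ) ∣ (g - a p)}) = Set.range h :=
  stmt_18_general k h hadm S P hP x hx hsub hS hcard
end
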